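/- arXiv:0705.4481 — 2 statements merged into one kernel-verified Lean document; each statement's English description precedes it below -/
import Mathlib

section
/- Let p be a prime with p ≠ 2, let k be a field of characteristic p, and let f = x₀x₁² − x₂² in k[x₀,…,xₙ] (n ≥ 2). Then f^{p−1} does not lie in the ideal (x₀^p, x₁^p, …, xₙ^p). -/
/-!
Write `p - 1 = 2a`. By the binomial theorem the coefficient of `x₀^a x₁^{2a} x₂^{2a}` in
`(x₀x₁² − x₂²)^{2a}` is `(-1)^a (2a choose a)`, a unit in characteristic `p` since `2a < p`.
All exponents of that monomial are below `p`, so it is divisible by no `xᵢ^p`; as the ideal is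
spanned by monomials, a polynomial with this monomial in its support is not in the ideal.
-/

open MvPolynomial

theorem Nat.Prime.cast_choose_ne_zero {R : Type*} [AddMonoidWithOne R] {p a b : ℕ} [CharP R p]
    (hp : p.Prime) (hb : b < p) (ha : a ≤ b) : (b.choose a : R) ≠ 0 := by
  rw [Ne, CharP.cast_eq_zero_iff R p, ← hp.coprime_iff_not_dvd]
  exact hp.coprime_choose_of_lt hb ha

namespace MvPolynomial

variable {R σ : Type*}

section CommSemiring

variable [CommSemiring R]

theorem notMem_span_X_pow_of_coeff_ne_zero {p : ℕ} {f : MvPolynomial σ R} {d : σ →₀ ℕ}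
    (hf : coeff d f ≠ 0) (hd : ∀ i, d i < p) :
    f ∉ Ideal.span (Set.range fun i => (X i : MvPolynomial σ R) ^ p) := by
  have hgen : (Set.range fun i => (X i : MvPolynomial σ R) ^ p) =
      (fun s => monomial s (1 : R)) '' Set.range fun i => Finsupp.single i p := by
    rw [← Set.range_comp]
    simp only [Function.comp_def, X_pow_eq_monomial]
  rw [hgen, mem_ideal_span_monomial_image]
  intro h
  obtain ⟨_, ⟨i, rfl⟩, hle⟩ := h d (mem_support_iff.mpr hf)
  exact (hd i).not_ge (by simpa using hle i)

theorem coeff_monomial_add_monomial_pow {s t : σ →₀ ℕ} {i : σ} (hs : s i ≠ 0) (ht : t i = 0)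
    (c e : R) {N j : ℕ} (hj : j ≤ N) :
    coeff (j • s + (N - j) • t) ((monomial s c + monomial t e) ^ N) =
      c ^ j * e ^ (N - j) * N.choose j := by
  classical
  have hterm : ∀ m, monomial s c ^ m * monomial t e ^ (N - m) * (N.choose m : MvPolynomial σ R) =
      monomial (m • s + (N - m) • t) (c ^ m * e ^ (N - m) * N.choose m) := by
    intro m
    rw [monomial_pow, monomial_pow, monomial_mul, ← map_natCast C, mul_comm, C_mul_monomial,
      mul_comm]
  rw [add_pow, coeff_sum, Finset.sum_eq_single j]
  · rw [hterm, coeff_monomial, if_pos rfl]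
  · intro m _ hmj
    rw [hterm, coeff_monomial, if_neg]
    intro h
    -- the exponent of `X i` in the `m`-th binomial term is `m * s i`
    have hi := congrArg (· i) h
    simp only [Finsupp.add_apply, Finsupp.smul_apply, smul_eq_mul, ht, mul_zero, add_zero,
      mul_left_inj' hs] at hi
    exact hmj hi
  · exact fun hj' => absurd (Finset.mem_range.mpr (Nat.lt_succ_of_le hj)) hj'

end CommSemiring

section PinchPoint

variable [CommRing R] {i j l : σ}

theorem coeff_X_mul_X_sq_sub_X_sq_pow (hil : i ≠ l) (a : ℕ) :
    coeff (a • (Finsupp.single i 1 + Finsupp.single j 2) + a • Finsupp.single l 2)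
        ((X i * X j ^ 2 - X l ^ 2 : MvPolynomial σ R) ^ (a + a)) =
      (-1) ^ a * (a + a).choose a := by
  have hf : (X i * X j ^ 2 - X l ^ 2 : MvPolynomial σ R) =
      monomial (Finsupp.single i 1 + Finsupp.single j 2) 1 + monomial (Finsupp.single l 2) (-1) := by
    rw [X_pow_eq_monomial, X_pow_eq_monomial, X, monomial_mul, one_mul, map_neg, sub_eq_add_neg]
  have hs : (Finsupp.single i 1 + Finsupp.single j 2 : σ →₀ ℕ) i ≠ 0 := by simp
  have ht : (Finsupp.single l 2 : σ →₀ ℕ) i = 0 := Finsupp.single_eq_of_ne hil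
  have key := coeff_monomial_add_monomial_pow hs ht (1 : R) (-1) (Nat.le_add_right a a)
  rwa [Nat.add_sub_cancel, one_pow, one_mul, ← hf] at key

theorem single_add_single_add_single_apply_le (hij : i ≠ j) (hil : i ≠ l) (hjl : j ≠ l)
    (a : ℕ) (m : σ) :
    (a • (Finsupp.single i 1 + Finsupp.single j 2) + a • Finsupp.single l 2 : σ →₀ ℕ) m ≤ a + a := by
  classical
  have hle : (Finsupp.single i 1 + Finsupp.single j 2 : σ →₀ ℕ) m + Finsupp.single l 2 m ≤ 2 := by
    simp only [Finsupp.add_apply, Finsupp.single_apply]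
    split_ifs <;> subst_vars <;> simp_all
  rw [Finsupp.add_apply, Finsupp.smul_apply, Finsupp.smul_apply, smul_eq_mul, smul_eq_mul,
    ← mul_add]
  exact (Nat.mul_le_mul_left a hle).trans_eq (mul_two a)

end PinchPoint

end MvPolynomial

/-- Fedder's criterion for the pinch point `x₀x₁² = x₂²` in odd characteristic:
`(x₀x₁² − x₂²)^{p−1} ∉ (x₀^p, …, xₙ^p)`. -/
theorem pinch_point_fedder
    (p : ℕ) (hp : p.Prime) (hp2 : p ≠ 2)
    (k : Type*) [Field k] [CharP k p]
    (n : ℕ) (hn : 2 ≤ n) :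
    (X 0 * X 1 ^ 2 - X 2 ^ 2 : MvPolynomial (Fin (n + 1)) k) ^ (p - 1) ∉
      Ideal.span (Set.range fun i : Fin (n + 1) => (X i : MvPolynomial (Fin (n + 1)) k) ^ p) := by
  obtain ⟨a, ha⟩ := hp.even_sub_one hp2
  have hap : a + a < p := by have := hp.pos; omega
  have h1 : 1 % (n + 1) = 1 := Nat.mod_eq_of_lt (by omega)
  have h2 : 2 % (n + 1) = 2 := Nat.mod_eq_of_lt (by omega)
  have h01 : (0 : Fin (n + 1)) ≠ 1 := by simp [Fin.ext_iff, h1]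
  have h02 : (0 : Fin (n + 1)) ≠ 2 := by simp [Fin.ext_iff, h2]
  have h12 : (1 : Fin (n + 1)) ≠ 2 := by simp [Fin.ext_iff, h1, h2]
  rw [ha]
  refine notMem_span_X_pow_of_coeff_ne_zero (d := a • (Finsupp.single 0 1 + Finsupp.single 1 2) +
    a • Finsupp.single 2 2) ?_ fun m => ?_
  · rw [coeff_X_mul_X_sq_sub_X_sq_pow h02]
    exact mul_ne_zero (by simp) (hp.cast_choose_ne_zero hap le_add_self)
  · exact (single_add_single_add_single_apply_le h01 h02 h12 a m).trans_lt hap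
end

section
/- Let p be a prime, and suppose f ∈ k[x₁,…,xₙ] and g ∈ k[y₁,…,yₘ] over a field k of characteristic p satisfy f^{p−1} ∉ (x₁^p,…,xₙ^p) and g^{p−1} ∉ (y₁^p,…,yₘ^p). Then (fg)^{p−1} ∉ (x₁^p,…,xₙ^p, y₁^p,…,yₘ^p) in k[x₁,…,xₙ,y₁,…,yₘ]. -/
/-!
A polynomial lies outside `(xᵥ^p)` exactly when some monomial of its support has all
exponents `< p`. Since `f` and `g` live in disjoint variables, the coefficient of
`x^a y^b` in `f g` is `coeff a f * coeff b g`; so if `x^a` survives in `f^{p-1}` and `y^b`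
in `g^{p-1}`, then `x^a y^b` survives in `(fg)^{p-1} = f^{p-1} g^{p-1}`, and its exponents
are still all `< p`.
-/

open MvPolynomial

theorem Finsupp.sumElim_inj {α β γ : Type*} [Zero γ] {a a' : α →₀ γ} {b b' : β →₀ γ} :
    a.sumElim b = a'.sumElim b' ↔ a = a' ∧ b = b' := by
  refine ⟨fun h => ⟨?_, ?_⟩, fun ⟨ha, hb⟩ => ha ▸ hb ▸ rfl⟩
  · ext i; exact DFunLike.congr_fun h (Sum.inl i)
  · ext j; exact DFunLike.congr_fun h (Sum.inr j)

namespace MvPolynomial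

variable {R σ τ : Type*} [CommSemiring R]

theorem mem_ideal_span_X_pow_iff {x : MvPolynomial σ R} {p : ℕ} :
    x ∈ Ideal.span (Set.range fun v : σ => (X v : MvPolynomial σ R) ^ p) ↔
      ∀ d ∈ x.support, ∃ v, p ≤ d v := by
  have := @mem_ideal_span_monomial_image σ R _ x (Set.range fun v => Finsupp.single v p)
  rw [← Set.range_comp] at this
  simpa [X_pow_eq_monomial, Function.comp_def, Finsupp.single_le_iff] using this

theorem coeff_sumElim_rename_inl_mul_rename_inr
    (F : MvPolynomial σ R) (G : MvPolynomial τ R) (a : σ →₀ ℕ) (b : τ →₀ ℕ) :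
    coeff (a.sumElim b) (rename Sum.inl F * rename Sum.inr G) = coeff a F * coeff b G := by
  classical
  induction F using induction_on' with
  | monomial a' r =>
    induction G using induction_on' with
    | monomial b' s =>
      simp only [rename_monomial, monomial_mul, ← Finsupp.sumElim_eq_add, coeff_monomial,
        Finsupp.sumElim_inj]
      split_ifs <;> simp_all
    | add G₁ G₂ h₁ h₂ => simp only [map_add, mul_add, coeff_add, h₁, h₂]
  | add F₁ F₂ h₁ h₂ => simp only [map_add, add_mul, coeff_add, h₁, h₂]

theorem sumElim_mem_support_rename_inl_mul_rename_inr [NoZeroDivisors R]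
    {F : MvPolynomial σ R} {G : MvPolynomial τ R} {a : σ →₀ ℕ} {b : τ →₀ ℕ}
    (ha : a ∈ F.support) (hb : b ∈ G.support) :
    a.sumElim b ∈ (rename Sum.inl F * rename Sum.inr G).support := by
  rw [mem_support_iff, coeff_sumElim_rename_inl_mul_rename_inr]
  exact mul_ne_zero (mem_support_iff.mp ha) (mem_support_iff.mp hb)

end MvPolynomial

theorem fedder_product_disjoint_variables_general
    (p : ℕ)
    (k : Type*) [Field k] (n m : ℕ)
    (f : MvPolynomial (Fin n) k) (g : MvPolynomial (Fin m) k)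
    (hf : f ^ (p - 1) ∉ Ideal.span (Set.range fun i : Fin n => (X i : MvPolynomial (Fin n) k) ^ p))
    (hg : g ^ (p - 1) ∉ Ideal.span (Set.range fun j : Fin m => (X j : MvPolynomial (Fin m) k) ^ p)) :
    (rename (Sum.inl : Fin n → Fin n ⊕ Fin m) f *
        rename (Sum.inr : Fin m → Fin n ⊕ Fin m) g) ^ (p - 1) ∉
      Ideal.span (Set.range fun v : Fin n ⊕ Fin m =>
        (X v : MvPolynomial (Fin n ⊕ Fin m) k) ^ p) := by
  simp only [mem_ideal_span_X_pow_iff, not_forall, not_exists, not_le] at hf hg ⊢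
  obtain ⟨a, ha, ha_lt⟩ := hf
  obtain ⟨b, hb, hb_lt⟩ := hg
  refine ⟨a.sumElim b, ?_, ?_⟩
  · rw [mul_pow, ← map_pow, ← map_pow]
    exact sumElim_mem_support_rename_inl_mul_rename_inr ha hb
  · rintro (i | j)
    exacts [ha_lt i, hb_lt j]

/-- Fedder's criterion is preserved by products in disjoint variables:
if `f^{p−1} ∉ (xᵢ^p)` and `g^{p−1} ∉ (yⱼ^p)`, then
`(fg)^{p−1} ∉ (xᵢ^p, yⱼ^p)` in the combined polynomial ring. -/
theorem fedder_product_disjoint_variables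
    (p : ℕ) (hp : p.Prime)
    (k : Type*) [Field k] [CharP k p] (n m : ℕ)
    (f : MvPolynomial (Fin n) k) (g : MvPolynomial (Fin m) k)
    (hf : f ^ (p - 1) ∉ Ideal.span (Set.range fun i : Fin n => (X i : MvPolynomial (Fin n) k) ^ p))
    (hg : g ^ (p - 1) ∉ Ideal.span (Set.range fun j : Fin m => (X j : MvPolynomial (Fin m) k) ^ p)) :
    (rename (Sum.inl : Fin n → Fin n ⊕ Fin m) f *
        rename (Sum.inr : Fin m → Fin n ⊕ Fin m) g) ^ (p - 1) ∉
      Ideal.span (Set.range fun v : Fin n ⊕ Fin m =>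
        (X v : MvPolynomial (Fin n ⊕ Fin m) k) ^ p) :=
  fedder_product_disjoint_variables_general p k n m f g hf hg
end
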